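/- arXiv:math/0202023 — 5 statements merged into one kernel-verified Lean document; each statement's English description precedes it below -/
import Mathlib

section
/- Let μ be a probability measure on ℝ satisfying a Poincaré inequality with constant γ and with mean ρ. Set σ² = Var_μ(x) and suppose γ ≤ k σ² for some constant k ≥ 1. Then for every n ≥ 2 the normalized even moments satisfy m_{2n}/σ^{2n} ≤ ∏_{ℓ=2}^{n} (1 + k ℓ²), where m_k denotes the k-th centered moment of μ. -/
open MeasureTheory Real

theorem stmt_2 (μ : Measure ℝ) [IsProbabilityMeasure μ] (γ ρ k : ℝ) (hk : 1 ≤ k)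
    (hmom : ∀ m : ℕ, Integrable (fun x => (x - ρ) ^ m) μ)
    (hmean : ∫ x, x ∂μ = ρ)
    (hγσ : γ ≤ k * ∫ x, (x - ρ) ^ 2 ∂μ)
    (hpoinc : ∀ f : ℝ → ℝ, ContDiff ℝ (⊤ : ℕ∞) f →
      Integrable (fun x => f x ^ 2) μ → Integrable (fun x => deriv f x ^ 2) μ →
      ∫ x, f x ^ 2 ∂μ - (∫ x, f x ∂μ) ^ 2 ≤ γ * ∫ x, deriv f x ^ 2 ∂μ) :
    ∀ n : ℕ, 2 ≤ n →
      (∫ x, (x - ρ) ^ (2 * n) ∂μ) / (∫ x, (x - ρ) ^ 2 ∂μ) ^ n ≤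
        ∏ ℓ ∈ Finset.Icc 2 n, (1 + k * (ℓ : ℝ) ^ 2) := by
  set m : ℕ → ℝ := fun j => ∫ x, (x - ρ) ^ j ∂μ with hm
  have hmnonneg : ∀ j : ℕ, 0 ≤ m (2 * j) := by
    intro j
    refine integral_nonneg fun x => ?_
    rw [mul_comm, pow_mul]
    positivity
  have hσ2 : (0:ℝ) ≤ m 2 := by simpa using hmnonneg 1
  have hprodnn : ∀ n : ℕ, (0:ℝ) ≤ ∏ ℓ ∈ Finset.Icc 2 n, (1 + k * (ℓ : ℝ) ^ 2) := by
    intro n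
    refine Finset.prod_nonneg fun ℓ _ => ?_
    nlinarith [sq_nonneg (ℓ : ℝ)]
  rcases eq_or_lt_of_le hσ2 with hσ0 | hσpos
  · intro n hn
    rw [show (∫ x, (x - ρ) ^ 2 ∂μ) = 0 from hσ0.symm, zero_pow (by omega : n ≠ 0),
      div_zero]
    exact hprodnn n
  -- Poincaré inequality applied to f = (x-ρ)^(n+1)
  have hpo : ∀ n : ℕ, m (2 * (n + 1)) - (m (n + 1)) ^ 2 ≤
      γ * (((n:ℝ) + 1) ^ 2 * m (2 * n)) := by
    intro n
    have hderiv : ∀ x : ℝ, deriv (fun x => (x - ρ) ^ (n + 1)) x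
        = ((n:ℝ) + 1) * (x - ρ) ^ n := by
      intro x
      have h : HasDerivAt (fun x : ℝ => (x - ρ) ^ (n + 1))
          ((((n+1 : ℕ)):ℝ) * (x - ρ) ^ (n + 1 - 1) * 1) x :=
        ((hasDerivAt_id x).sub_const ρ).pow (n + 1)
      simpa using h.deriv
    have hcd : ContDiff ℝ (⊤ : ℕ∞) (fun x : ℝ => (x - ρ) ^ (n + 1)) :=
      (contDiff_id.sub contDiff_const).pow _
    have hsq : (fun x : ℝ => ((x - ρ) ^ (n + 1)) ^ 2) =
        fun x => (x - ρ) ^ (2 * (n + 1)) := by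
      funext x; rw [← pow_mul, mul_comm]
    have hi1 : Integrable (fun x => ((x - ρ) ^ (n + 1)) ^ 2) μ := by
      rw [hsq]; exact hmom _
    have hdsq : (fun x : ℝ => (deriv (fun x => (x - ρ) ^ (n + 1)) x) ^ 2) =
        fun x => ((n:ℝ) + 1) ^ 2 * (x - ρ) ^ (2 * n) := by
      funext x; rw [hderiv x, mul_pow, ← pow_mul, mul_comm n 2]
    have hi2 : Integrable (fun x => (deriv (fun x => (x - ρ) ^ (n + 1)) x) ^ 2) μ := by
      rw [hdsq]; exact (hmom _).const_mul _
    have := hpoinc (fun x => (x - ρ) ^ (n + 1)) hcd hi1 hi2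
    rw [hsq, hdsq, integral_const_mul] at this
    simpa [hm] using this
  -- Cauchy–Schwarz: m(n+1)^2 ≤ m 2 * m(2n)
  have hCS : ∀ n : ℕ, (m (n + 1)) ^ 2 ≤ m 2 * m (2 * n) := by
    intro n
    set t : ℝ := m (n + 1) / m 2 with ht
    have hnn : 0 ≤ ∫ x, ((x - ρ) ^ n - t * (x - ρ)) ^ 2 ∂μ :=
      integral_nonneg fun x => sq_nonneg _
    have hexp : (fun x : ℝ => ((x - ρ) ^ n - t * (x - ρ)) ^ 2) =
        fun x => (x - ρ) ^ (2 * n) - 2 * t * (x - ρ) ^ (n + 1) + t ^ 2 * (x - ρ) ^ 2 := by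
      funext x; ring
    rw [hexp] at hnn
    have hsub : Integrable (fun x => (x - ρ) ^ (2 * n) - 2 * t * (x - ρ) ^ (n + 1)) μ :=
      (hmom (2 * n)).sub ((hmom (n + 1)).const_mul (2 * t))
    have hcm : Integrable (fun x => t ^ 2 * (x - ρ) ^ 2) μ := (hmom 2).const_mul _
    have hcm' : Integrable (fun x => 2 * t * (x - ρ) ^ (n + 1)) μ :=
      (hmom (n + 1)).const_mul _
    rw [integral_add hsub hcm, integral_sub (hmom (2 * n)) hcm',
      integral_const_mul, integral_const_mul] at hnn
    · have h2 : ∫ x, (x - ρ) ^ (2 * n) ∂μ = m (2 * n) := rfl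
      have h3 : ∫ x, (x - ρ) ^ (n + 1) ∂μ = m (n + 1) := rfl
      have h4 : ∫ x, (x - ρ) ^ 2 ∂μ = m 2 := rfl
      rw [h2, h3, h4] at hnn
      have ht2 : t * m 2 = m (n + 1) := by
        rw [ht, div_mul_cancel₀ _ (ne_of_gt hσpos)]
      nlinarith [hnn, ht2]
  -- main induction
  have claim : ∀ n : ℕ, 1 ≤ n →
      m (2 * n) ≤ (∏ ℓ ∈ Finset.Icc 2 n, (1 + k * (ℓ : ℝ) ^ 2)) * (m 2) ^ n := by
    intro n hn
    induction n, hn using Nat.le_induction with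
    | base => simp [Finset.Icc_eq_empty_of_lt]
    | succ n hn ih =>
      have hPnn := hprodnn n
      have ha := hmnonneg n
      have hpon := hpo n
      have hCSn := hCS n
      have hγ' : γ * (((n:ℝ) + 1) ^ 2 * m (2 * n)) ≤
          k * m 2 * (((n:ℝ) + 1) ^ 2 * m (2 * n)) := by
        have : (0:ℝ) ≤ ((n:ℝ) + 1) ^ 2 * m (2 * n) := by positivity
        exact mul_le_mul_of_nonneg_right hγσ this
      have hstep : m (2 * (n + 1)) ≤ (1 + k * ((n:ℝ) + 1) ^ 2) * (m 2 * m (2 * n)) := by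
        nlinarith
      have hmul : (1 + k * ((n:ℝ) + 1) ^ 2) * (m 2 * m (2 * n)) ≤
          (1 + k * ((n:ℝ) + 1) ^ 2) * (m 2 *
            ((∏ ℓ ∈ Finset.Icc 2 n, (1 + k * (ℓ : ℝ) ^ 2)) * (m 2) ^ n)) := by
        have hfac : (0:ℝ) ≤ (1 + k * ((n:ℝ) + 1) ^ 2) * m 2 := by
          have h1 : (0:ℝ) ≤ 1 + k * ((n:ℝ) + 1) ^ 2 := by
            nlinarith [mul_nonneg (zero_le_one.trans hk) (sq_nonneg ((n:ℝ) + 1))]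
          exact mul_nonneg h1 hσpos.le
        calc (1 + k * ((n:ℝ) + 1) ^ 2) * (m 2 * m (2 * n))
            = (1 + k * ((n:ℝ) + 1) ^ 2) * m 2 * m (2 * n) := by ring
          _ ≤ (1 + k * ((n:ℝ) + 1) ^ 2) * m 2 *
              ((∏ ℓ ∈ Finset.Icc 2 n, (1 + k * (ℓ : ℝ) ^ 2)) * (m 2) ^ n) :=
            mul_le_mul_of_nonneg_left ih hfac
          _ = _ := by ring
      rw [Finset.prod_Icc_succ_top (by omega : 2 ≤ n + 1), pow_succ]
      push_cast
      calc m (2 * (n + 1)) ≤ (1 + k * ((n:ℝ) + 1) ^ 2) * (m 2 * m (2 * n)) := hstep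
        _ ≤ _ := hmul
        _ = (∏ ℓ ∈ Finset.Icc 2 n, (1 + k * (ℓ : ℝ) ^ 2)) *
            (1 + k * ((n:ℝ) + 1) ^ 2) * ((m 2) ^ n * m 2) := by ring
  intro n hn
  rw [div_le_iff₀ (pow_pos hσpos n)]
  exact claim n (by omega)
end

section
/- Let μ be a probability measure on ℝ with mean zero satisfying a Poincaré inequality with constant γ > 0. Let u(t) = ∫ e^{tx} μ(dx). Then for 0 < t < 2/√γ one has u(t) ≤ (1 − γt²/4)⁻¹ u(t/2)². -/
open MeasureTheory Real

theorem stmt_3 (μ : Measure ℝ) [IsProbabilityMeasure μ] (γ : ℝ) (hγ : 0 < γ)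
    (hid : Integrable (fun x => x) μ) (hmean : ∫ x, x ∂μ = 0)
    (hpoinc : ∀ f : ℝ → ℝ, ContDiff ℝ (⊤ : ℕ∞) f →
      Integrable (fun x => f x ^ 2) μ → Integrable (fun x => deriv f x ^ 2) μ →
      ∫ x, f x ^ 2 ∂μ - (∫ x, f x ∂μ) ^ 2 ≤ γ * ∫ x, deriv f x ^ 2 ∂μ)
    (t : ℝ) (ht0 : 0 < t) (ht : t < 2 / Real.sqrt γ)
    (hexp : Integrable (fun x => Real.exp (t * x)) μ)
    (hexp2 : Integrable (fun x => Real.exp (t / 2 * x)) μ) :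
    ∫ x, Real.exp (t * x) ∂μ ≤
      (1 - γ * t ^ 2 / 4)⁻¹ * (∫ x, Real.exp (t / 2 * x) ∂μ) ^ 2 := by
  set f : ℝ → ℝ := fun x => Real.exp (t / 2 * x) with hf
  have hcd : ContDiff ℝ (⊤ : ℕ∞) f := (Real.contDiff_exp).comp (contDiff_const.mul contDiff_id)
  have hsq : (fun x => f x ^ 2) = fun x => Real.exp (t * x) := by
    funext x
    show Real.exp (t / 2 * x) ^ 2 = _
    rw [sq, ← Real.exp_add]
    ring_nf
  have hderiv : ∀ x, deriv f x = (t / 2) * Real.exp (t / 2 * x) := by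
    intro x
    have : HasDerivAt f ((t / 2) * Real.exp (t / 2 * x)) x := by
      exact ((Real.hasDerivAt_exp (t / 2 * x)).comp x
        ((hasDerivAt_id x).const_mul (t / 2))).congr_deriv (by simp only [id, mul_one]; ring)
    exact this.deriv
  have hdsq : (fun x => deriv f x ^ 2) = fun x => (t / 2) ^ 2 * Real.exp (t * x) := by
    funext x
    rw [hderiv x, mul_pow, sq (Real.exp _), ← Real.exp_add]
    ring_nf
  have hint1 : Integrable (fun x => f x ^ 2) μ := by rw [hsq]; exact hexp
  have hint2 : Integrable (fun x => deriv f x ^ 2) μ := by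
    rw [hdsq]; exact hexp.const_mul _
  have key := hpoinc f hcd hint1 hint2
  rw [hsq, hdsq] at key
  rw [integral_const_mul] at key
  have hc : γ * t ^ 2 / 4 < 1 := by
    have hs : Real.sqrt γ > 0 := Real.sqrt_pos.mpr hγ
    have h1 : t * Real.sqrt γ < 2 := by
      rw [div_eq_mul_inv] at ht
      calc t * Real.sqrt γ < 2 / Real.sqrt γ * Real.sqrt γ := by
            exact mul_lt_mul_of_pos_right ht hs
        _ = 2 := by field_simp
    have h2 : (t * Real.sqrt γ) ^ 2 < 4 := by
      nlinarith [mul_pos ht0 hs]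
    rw [mul_pow, Real.sq_sqrt hγ.le] at h2
    nlinarith
  have hpos : 0 < 1 - γ * t ^ 2 / 4 := by linarith
  have : (1 - γ * t ^ 2 / 4) * ∫ x, Real.exp (t * x) ∂μ ≤
      (∫ x, Real.exp (t / 2 * x) ∂μ) ^ 2 := by
    have : γ * ((t / 2) ^ 2 * ∫ x, Real.exp (t * x) ∂μ) = γ * t ^ 2 / 4 * ∫ x, Real.exp (t * x) ∂μ := by ring
    rw [this] at key
    linarith [key]
  calc ∫ x, Real.exp (t * x) ∂μ
      = (1 - γ * t ^ 2 / 4)⁻¹ * ((1 - γ * t ^ 2 / 4) * ∫ x, Real.exp (t * x) ∂μ) := by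
        rw [← mul_assoc, inv_mul_cancel₀ hpos.ne', one_mul]
    _ ≤ (1 - γ * t ^ 2 / 4)⁻¹ * (∫ x, Real.exp (t / 2 * x) ∂μ) ^ 2 := by
        exact mul_le_mul_of_nonneg_left this (inv_nonneg.mpr hpos.le)
end

section
/- Let μ be a probability measure on ℝ with mean zero satisfying a Poincaré inequality with constant γ > 0. Then ∫ e^{|x|/√γ} μ(dx) < ∞. In particular, exponential integrability at rate 1/√γ holds. -/
open MeasureTheory Real

open Filter

private lemma stmt4_exp_le_quad {y : ℝ} (hy : y ≤ 1) :
    Real.exp y ≤ 1 + y + |y| * min |y| 1 := by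
  rcases le_or_gt |y| 1 with h | h
  · have hb := Real.exp_bound h (by norm_num : 0 < 2)
    have hs : ∑ m ∈ Finset.range 2, y ^ m / (m.factorial : ℝ) = 1 + y := by
      simp [Finset.sum_range_succ]
    rw [hs] at hb
    have h1 : Real.exp y - (1 + y) ≤ |y| ^ 2 * (3 / (2 * 2)) := by
      have := abs_le.mp hb
      simpa [Nat.factorial] using this.2
    have h2 : min |y| 1 = |y| := min_eq_left h
    nlinarith [abs_nonneg y, sq_abs y]
  · have hneg : y < -1 := by
      rcases abs_cases y with ⟨h1, _⟩ | ⟨h1, _⟩ <;> linarith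
    have h2 : min |y| 1 = 1 := min_eq_right h.le
    have h3 : |y| = -y := abs_of_neg (by linarith)
    have : Real.exp y ≤ 1 := by
      rw [show (1:ℝ) = Real.exp 0 by simp]
      exact Real.exp_le_exp.mpr (by linarith)
    rw [h2, h3]; linarith

private lemma stmt4_step_bound {u v w : ℝ} (hv : 0 ≤ v) (hu : 0 < u) (hu2 : u ≤ 1/2)
    (h : (1 - u) * v ≤ w) : v ≤ Real.exp (2 * u) * w := by
  have he : 1 + 2*u ≤ Real.exp (2*u) := by
    have := Real.add_one_le_exp (2*u); linarith
  have h1 : Real.exp (2*u) * ((1-u)*v) ≤ Real.exp (2*u) * w :=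
    mul_le_mul_of_nonneg_left h (Real.exp_pos (2*u)).le
  have h2 : (0:ℝ) ≤ (1-u)*v := mul_nonneg (by linarith) hv
  have h3 : (1+2*u) * ((1-u)*v) ≤ Real.exp (2*u) * ((1-u)*v) :=
    mul_le_mul_of_nonneg_right he h2
  nlinarith [mul_nonneg (mul_nonneg hu.le (by linarith : (0:ℝ) ≤ 1-2*u)) hv]

private lemma stmt4_rec (μ : Measure ℝ) [IsProbabilityMeasure μ] (γ : ℝ) (hγ : 0 < γ)
    (hpoinc : ∀ f : ℝ → ℝ, ContDiff ℝ (⊤ : ℕ∞) f →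
      Integrable (fun x => f x ^ 2) μ → Integrable (fun x => deriv f x ^ 2) μ →
      ∫ x, f x ^ 2 ∂μ - (∫ x, f x ∂μ) ^ 2 ≤ γ * ∫ x, deriv f x ^ 2 ∂μ)
    (ψ d : ℝ → ℝ) (n : ℕ)
    (hψcont : Continuous ψ) (hψsmooth : ContDiff ℝ (⊤ : ℕ∞) ψ) (hdcont : Continuous d)
    (hψderiv : ∀ x, HasDerivAt ψ (d x) x)
    (hdsq : ∀ x, d x ^ 2 ≤ 1) (hψub : ∀ x, ψ x ≤ n) :
    ∀ τ : ℝ, 0 ≤ τ → (1 - γ * τ ^ 2 / 4) * (∫ x, Real.exp (τ * ψ x) ∂μ)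
      ≤ (∫ x, Real.exp (τ / 2 * ψ x) ∂μ) ^ 2 := by
  have hexpint : ∀ c : ℝ, 0 ≤ c → Integrable (fun x => Real.exp (c * ψ x)) μ := by
    intro c hc
    refine Integrable.mono' (integrable_const (Real.exp (c * n))) ?_ ?_
    · exact ((Real.continuous_exp.comp (continuous_const.mul hψcont))).aestronglyMeasurable
    · filter_upwards with x
      rw [Real.norm_eq_abs, abs_of_pos (Real.exp_pos _)]
      exact Real.exp_le_exp.mpr (mul_le_mul_of_nonneg_left (hψub x) hc)
  intro τ hτ
  set c := τ / 2 with hc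
  have hc0 : 0 ≤ c := by positivity
  set f : ℝ → ℝ := fun x => Real.exp (c * ψ x) with hf
  have hf2 : ∀ x, f x ^ 2 = Real.exp (τ * ψ x) := by
    intro x; rw [sq, ← Real.exp_add]; congr 1; rw [hc]; ring
  have hfd : ∀ x, HasDerivAt f (Real.exp (c * ψ x) * (c * d x)) x := by
    intro x; exact ((hψderiv x).const_mul c).exp
  have hderiv_eq : deriv f = fun x => Real.exp (c * ψ x) * (c * d x) :=
    funext fun x => (hfd x).deriv
  have hfsm : ContDiff ℝ (⊤ : ℕ∞) f := (contDiff_const.mul hψsmooth).exp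
  have hint2 : Integrable (fun x => f x ^ 2) μ := by
    refine (hexpint τ hτ).congr ?_
    filter_upwards with x using (hf2 x).symm
  have hcsq : c ^ 2 = τ ^ 2 / 4 := by rw [hc]; ring
  have hdb : ∀ x, deriv f x ^ 2 ≤ τ ^ 2 / 4 * Real.exp (τ * ψ x) := by
    intro x
    rw [hderiv_eq]
    have h1 : Real.exp (c * ψ x) ^ 2 = Real.exp (τ * ψ x) := hf2 x
    have h2 : (Real.exp (c * ψ x) * (c * d x)) ^ 2
        = c ^ 2 * d x ^ 2 * Real.exp (c * ψ x) ^ 2 := by ring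
    rw [h2, h1, ← hcsq]
    have h3 := mul_le_mul_of_nonneg_right
      (mul_le_mul_of_nonneg_left (hdsq x) (sq_nonneg c)) (Real.exp_pos (τ * ψ x)).le
    calc c ^ 2 * d x ^ 2 * Real.exp (τ * ψ x) ≤ c ^ 2 * 1 * Real.exp (τ * ψ x) := h3
      _ = c ^ 2 * Real.exp (τ * ψ x) := by ring
  have hintd : Integrable (fun x => deriv f x ^ 2) μ := by
    refine Integrable.mono' ((hexpint τ hτ).const_mul (τ ^ 2 / 4)) ?_ ?_
    · simp only [hderiv_eq]
      exact (((Real.continuous_exp.comp (continuous_const.mul hψcont)).mul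
        (continuous_const.mul hdcont)).pow 2).aestronglyMeasurable
    · filter_upwards with x
      rw [Real.norm_eq_abs, abs_of_nonneg (sq_nonneg _)]
      exact hdb x
  have hP := hpoinc f hfsm hint2 hintd
  have hfsq : ∫ x, f x ^ 2 ∂μ = ∫ x, Real.exp (τ * ψ x) ∂μ :=
    integral_congr_ae (Filter.Eventually.of_forall hf2)
  have hdint : ∫ x, deriv f x ^ 2 ∂μ ≤ τ ^ 2 / 4 * ∫ x, Real.exp (τ * ψ x) ∂μ := by
    rw [← MeasureTheory.integral_const_mul]
    exact integral_mono hintd ((hexpint τ hτ).const_mul _) hdb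
  rw [hfsq] at hP
  have hγd : γ * ∫ x, deriv f x ^ 2 ∂μ ≤ γ * (τ ^ 2 / 4 * ∫ x, Real.exp (τ * ψ x) ∂μ) :=
    mul_le_mul_of_nonneg_left hdint hγ.le
  have : (∫ x, f x ∂μ) = ∫ x, Real.exp (τ / 2 * ψ x) ∂μ := rfl
  rw [this] at hP
  nlinarith [hP, hγd]

private lemma stmt4_iter (μ : Measure ℝ) [IsProbabilityMeasure μ] (γ : ℝ) (hγ : 0 < γ)
    (t : ℝ) (ht : t = (Real.sqrt γ)⁻¹)
    (ψ : ℝ → ℝ) (n : ℕ) (hψcont : Continuous ψ)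
    (hψub : ∀ x, ψ x ≤ n) (hψint : Integrable ψ μ)
    (hIneg : ∫ x, ψ x ∂μ ≤ 0)
    (hexpint : ∀ c : ℝ, 0 ≤ c → Integrable (fun x => Real.exp (c * ψ x)) μ)
    (hrec : ∀ τ : ℝ, 0 ≤ τ → (1 - γ * τ ^ 2 / 4) * (∫ x, Real.exp (τ * ψ x) ∂μ)
      ≤ (∫ x, Real.exp (τ / 2 * ψ x) ∂μ) ^ 2) :
    ∫ x, Real.exp (t * ψ x) ∂μ ≤ Real.exp 1 := by
  set v : ℝ → ℝ := fun τ => ∫ x, Real.exp (τ * ψ x) ∂μ with hvdef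
  have hsqpos : 0 < Real.sqrt γ := Real.sqrt_pos.mpr hγ
  have htpos : 0 < t := by rw [ht]; positivity
  have hγt : γ * t ^ 2 = 1 := by
    rw [ht, ← Real.sq_sqrt hγ.le]; field_simp; rw [Real.sqrt_sq hsqpos.le]
  have hvnn : ∀ τ : ℝ, 0 ≤ v τ :=
    fun τ => integral_nonneg fun x => (Real.exp_pos _).le
  have hA : ∀ s : ℕ, γ * (t / 2 ^ s) ^ 2 / 4 = (4:ℝ)⁻¹ ^ (s + 1) := by
    intro s
    have h2s : ((2:ℝ) ^ s) ≠ 0 := by positivity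
    have h24 : ((2:ℝ) ^ s) ^ 2 = 4 ^ s := by
      rw [← pow_mul, mul_comm, pow_mul]; norm_num
    calc γ * (t / 2 ^ s) ^ 2 / 4 = (γ * t ^ 2) / (((2:ℝ) ^ s) ^ 2 * 4) := by ring
      _ = 1 / ((4:ℝ) ^ s * 4) := by rw [hγt, h24]
      _ = (4:ℝ)⁻¹ ^ (s + 1) := by rw [inv_pow]; rw [pow_succ]; ring
  have hstep : ∀ s : ℕ, v (t / 2 ^ s) ≤
      Real.exp (2 * (4:ℝ)⁻¹ ^ (s + 1)) * v (t / 2 ^ (s + 1)) ^ 2 := by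
    intro s
    have hτ0 : (0:ℝ) ≤ t / 2 ^ s := by positivity
    have h := hrec (t / 2 ^ s) hτ0
    rw [hA s] at h
    have hhalf : t / 2 ^ s / 2 = t / 2 ^ (s + 1) := by rw [pow_succ]; ring
    rw [hhalf] at h
    refine stmt4_step_bound (hvnn _) (by positivity) ?_ h
    calc (4:ℝ)⁻¹ ^ (s + 1) ≤ (4:ℝ)⁻¹ ^ 1 := by
          apply pow_le_pow_of_le_one (by norm_num) (by norm_num) (by omega)
      _ ≤ 1/2 := by norm_num
  have hiter : ∀ s : ℕ, v t ≤ Real.exp (1 - (2:ℝ)⁻¹ ^ s) * v (t / 2 ^ s) ^ (2 ^ s) := by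
    intro s
    induction s with
    | zero => simp
    | succ s ih =>
      have h1 : v (t / 2 ^ s) ^ (2 ^ s) ≤
          (Real.exp (2 * (4:ℝ)⁻¹ ^ (s + 1)) * v (t / 2 ^ (s + 1)) ^ 2) ^ (2 ^ s) :=
        pow_le_pow_left₀ (hvnn _) (hstep s) _
      have hexps : ((2:ℝ))^s * (2 * 4⁻¹^(s+1)) = 2⁻¹^(s+1) := by
        rw [inv_pow, inv_pow, show (4:ℝ) = 2 * 2 by norm_num, mul_pow]
        have h : ((2:ℝ))^(s+1) ≠ 0 := by positivity
        field_simp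
        rw [pow_succ]
      have h2 : (Real.exp (2 * (4:ℝ)⁻¹ ^ (s + 1)) * v (t / 2 ^ (s + 1)) ^ 2) ^ (2 ^ s)
          = Real.exp ((2:ℝ)⁻¹ ^ (s + 1)) * v (t / 2 ^ (s + 1)) ^ (2 ^ (s + 1)) := by
        rw [mul_pow, ← pow_mul, ← Real.exp_nat_mul]
        congr 2
        · push_cast; exact hexps
        · rw [pow_succ]; ring
      calc v t ≤ Real.exp (1 - (2:ℝ)⁻¹ ^ s) * v (t / 2 ^ s) ^ (2 ^ s) := ih
        _ ≤ Real.exp (1 - (2:ℝ)⁻¹ ^ s) *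
            (Real.exp ((2:ℝ)⁻¹ ^ (s + 1)) * v (t / 2 ^ (s + 1)) ^ (2 ^ (s + 1))) := by
            rw [← h2]
            exact mul_le_mul_of_nonneg_left h1 (Real.exp_pos _).le
        _ = Real.exp (1 - (2:ℝ)⁻¹ ^ (s + 1)) * v (t / 2 ^ (s + 1)) ^ (2 ^ (s + 1)) := by
            rw [← mul_assoc, ← Real.exp_add]
            congr 2
            have : ((2:ℝ))⁻¹^s = 2 * 2⁻¹^(s+1) := by rw [pow_succ]; ring
            rw [this]; ring
  have hiter' : ∀ s : ℕ, v t ≤ Real.exp 1 * v (t / 2 ^ s) ^ (2 ^ s) := by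
    intro s
    refine (hiter s).trans (mul_le_mul_of_nonneg_right ?_ (pow_nonneg (hvnn _) _))
    refine Real.exp_le_exp.mpr ?_
    have := pow_nonneg (by norm_num : (0:ℝ) ≤ 2⁻¹) s
    linarith
  set I := ∫ x, ψ x ∂μ with hIdef
  set D : ℕ → ℝ := fun s => ∫ x, |ψ x| * min ((t / 2 ^ s) * |ψ x|) 1 ∂μ with hDdef
  have hτs : ∀ s : ℕ, (0:ℝ) ≤ t / 2 ^ s := fun s => by positivity
  have hFcont : ∀ s : ℕ, Continuous (fun x => |ψ x| * min ((t / 2 ^ s) * |ψ x|) 1) :=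
    fun s => hψcont.abs.mul ((continuous_const.mul hψcont.abs).min continuous_const)
  have hFbd : ∀ s : ℕ, ∀ x : ℝ, ‖|ψ x| * min ((t / 2 ^ s) * |ψ x|) 1‖ ≤ |ψ x| := by
    intro s x
    have h0 : 0 ≤ min ((t / 2 ^ s) * |ψ x|) 1 :=
      le_min (mul_nonneg (hτs s) (abs_nonneg _)) one_pos.le
    have h1 : min ((t / 2 ^ s) * |ψ x|) 1 ≤ 1 := min_le_right _ _
    rw [Real.norm_eq_abs, abs_of_nonneg (mul_nonneg (abs_nonneg _) h0)]
    nlinarith [abs_nonneg (ψ x)]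
  have hDint : ∀ s : ℕ, Integrable (fun x => |ψ x| * min ((t / 2 ^ s) * |ψ x|) 1) μ := by
    intro s
    exact Integrable.mono' hψint.abs (hFcont s).aestronglyMeasurable
      (Filter.Eventually.of_forall (hFbd s))
  have hsmall : ∀ s : ℕ, (t / 2 ^ s) * (n:ℝ) ≤ 1 →
      v (t / 2 ^ s) ≤ 1 + (t / 2 ^ s) * I + (t / 2 ^ s) * D s := by
    intro s hs
    have hτ : (0:ℝ) ≤ t / 2 ^ s := hτs s
    have hpt : ∀ x, Real.exp ((t / 2 ^ s) * ψ x)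
        ≤ 1 + (t / 2 ^ s) * ψ x + (t / 2 ^ s) * (|ψ x| * min ((t / 2 ^ s) * |ψ x|) 1) := by
      intro x
      have hy : (t / 2 ^ s) * ψ x ≤ 1 := by
        rcases le_or_gt (ψ x) 0 with h | h
        · nlinarith
        · have := mul_le_mul_of_nonneg_left (hψub x) hτ
          linarith
      have hq := stmt4_exp_le_quad hy
      rw [abs_mul, abs_of_nonneg hτ] at hq
      refine hq.trans (le_of_eq (by ring))
    have hR : Integrable
        (fun x => 1 + (t / 2 ^ s) * ψ x + (t / 2 ^ s) * (|ψ x| * min ((t / 2 ^ s) * |ψ x|) 1)) μ :=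
      ((integrable_const 1).add (hψint.const_mul _)).add ((hDint s).const_mul _)
    have hmono := integral_mono (hexpint _ hτ) hR hpt
    have hint1 : Integrable (fun x => 1 + t / 2 ^ s * ψ x) μ :=
      (integrable_const 1).add (hψint.const_mul _)
    have hint2 : Integrable (fun x => t / 2 ^ s * (|ψ x| * min (t / 2 ^ s * |ψ x|) 1)) μ :=
      (hDint s).const_mul _
    rw [integral_add hint1 hint2, integral_add (integrable_const 1) (hψint.const_mul _),
      MeasureTheory.integral_const_mul, MeasureTheory.integral_const_mul, integral_const] at hmono
    simpa [measure_univ] using hmono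
  have h0 : Tendsto (fun s : ℕ => t / 2 ^ s) atTop (nhds 0) := by
    have h1 : Tendsto (fun s : ℕ => t * (2:ℝ)⁻¹ ^ s) atTop (nhds (t * 0)) :=
      tendsto_const_nhds.mul (tendsto_pow_atTop_nhds_zero_of_lt_one (by norm_num) (by norm_num))
    simpa [div_eq_mul_inv, inv_pow, mul_zero] using h1
  have hDlim : Tendsto D atTop (nhds 0) := by
    have key := tendsto_integral_of_dominated_convergence (μ := μ)
      (F := fun s x => |ψ x| * min ((t / 2 ^ s) * |ψ x|) 1) (f := fun _ => 0)
      (fun x => |ψ x|) (fun s => (hFcont s).aestronglyMeasurable) hψint.abs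
      (fun s => Filter.Eventually.of_forall (hFbd s)) ?_
    · simpa using key
    · filter_upwards with x
      have h2 : Tendsto (fun s : ℕ => (t / 2 ^ s) * |ψ x|) atTop (nhds 0) := by
        simpa using h0.mul_const |ψ x|
      have h3 : Tendsto (fun s : ℕ => min ((t / 2 ^ s) * |ψ x|) 1) atTop (nhds (min 0 1)) :=
        h2.min tendsto_const_nhds
      have h4 := tendsto_const_nhds (x := |ψ x|) (f := atTop (α := ℕ)) |>.mul h3
      simpa using h4
  have hev : ∀ᶠ s : ℕ in atTop, v t ≤ Real.exp 1 * Real.exp (t * D s) := by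
    have hev1 : ∀ᶠ s : ℕ in atTop, (t / 2 ^ s) * (n:ℝ) < 1 := by
      have := h0.mul_const (n:ℝ)
      rw [zero_mul] at this
      exact this.eventually_lt_const (by norm_num)
    filter_upwards [hev1] with s hs
    have h1 := hsmall s hs.le
    have h2 : v (t / 2 ^ s) ≤ Real.exp ((t / 2 ^ s) * (I + D s)) := by
      have ha := Real.add_one_le_exp ((t / 2 ^ s) * (I + D s))
      calc v (t / 2 ^ s) ≤ 1 + (t / 2 ^ s) * I + (t / 2 ^ s) * D s := h1
        _ = (t / 2 ^ s) * (I + D s) + 1 := by ring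
        _ ≤ Real.exp ((t / 2 ^ s) * (I + D s)) := ha
    have h3 : v (t / 2 ^ s) ^ (2 ^ s) ≤ Real.exp ((t / 2 ^ s) * (I + D s)) ^ (2 ^ s) :=
      pow_le_pow_left₀ (hvnn _) h2 _
    have h4 : Real.exp ((t / 2 ^ s) * (I + D s)) ^ (2 ^ s) = Real.exp (t * (I + D s)) := by
      rw [← Real.exp_nat_mul]
      congr 1
      have h2s : ((2:ℝ) ^ s) ≠ 0 := by positivity
      push_cast
      field_simp
    have h5 : Real.exp (t * (I + D s)) ≤ Real.exp (t * D s) := by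
      apply Real.exp_le_exp.mpr
      nlinarith
    calc v t ≤ Real.exp 1 * v (t / 2 ^ s) ^ (2 ^ s) := hiter' s
      _ ≤ Real.exp 1 * Real.exp (t * (I + D s)) := by
          rw [← h4]
          exact mul_le_mul_of_nonneg_left h3 (Real.exp_pos 1).le
      _ ≤ Real.exp 1 * Real.exp (t * D s) :=
          mul_le_mul_of_nonneg_left h5 (Real.exp_pos 1).le
  have hlim : Tendsto (fun s : ℕ => Real.exp 1 * Real.exp (t * D s)) atTop
      (nhds (Real.exp 1)) := by
    have h1 : Tendsto (fun s : ℕ => t * D s) atTop (nhds 0) := by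
      simpa using hDlim.const_mul t
    have h2 := (Real.continuous_exp.continuousAt (x := (0:ℝ))).tendsto.comp h1
    simp only [Real.exp_zero] at h2
    simpa using tendsto_const_nhds.mul h2
  exact ge_of_tendsto hlim hev

private lemma stmt4_fatou (μ : Measure ℝ) [IsProbabilityMeasure μ] (t σ : ℝ) (htpos : 0 < t) (hσ : |σ| = 1)
    (hunif : ∀ n : ℕ, ∫ x, Real.exp (t * (σ * x - Real.log (1 + Real.exp (σ * x - n)))) ∂μ
      ≤ Real.exp 1)
    (hexpint : ∀ n : ℕ,
      Integrable (fun x => Real.exp (t * (σ * x - Real.log (1 + Real.exp (σ * x - n))))) μ) :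
    Integrable (fun x => Real.exp (t * (σ * x))) μ := by
  set ψ : ℕ → ℝ → ℝ := fun n x => σ * x - Real.log (1 + Real.exp (σ * x - n)) with hψdef
  have hψcont : ∀ n : ℕ, Continuous (ψ n) := by
    intro n
    refine (continuous_const.mul continuous_id).sub (Continuous.log ?_ fun x => ?_)
    · fun_prop
    · positivity
  have hmeas : ∀ n : ℕ, Measurable fun x => ENNReal.ofReal (Real.exp (t * ψ n x)) := fun n =>
    ENNReal.measurable_ofReal.comp
      (Real.continuous_exp.comp (continuous_const.mul (hψcont n))).measurable
  have hlin : ∀ n : ℕ, ∫⁻ x, ENNReal.ofReal (Real.exp (t * ψ n x)) ∂μ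
      ≤ ENNReal.ofReal (Real.exp 1) := by
    intro n
    rw [← ofReal_integral_eq_lintegral_ofReal (hexpint n)
      (Filter.Eventually.of_forall fun x => (Real.exp_pos _).le)]
    exact ENNReal.ofReal_le_ofReal (hunif n)
  have hpt : ∀ x : ℝ, Tendsto (fun n : ℕ => ENNReal.ofReal (Real.exp (t * ψ n x))) atTop
      (nhds (ENNReal.ofReal (Real.exp (t * (σ * x))))) := by
    intro x
    have h1 : Tendsto (fun n : ℕ => Real.exp (σ * x - n)) atTop (nhds 0) := by
      have h2 : ∀ n : ℕ, Real.exp (σ * x - n) = Real.exp (σ * x) * Real.exp (-1) ^ n := by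
        intro n
        rw [← Real.exp_nat_mul, ← Real.exp_add]
        congr 1; push_cast; ring
      simp only [h2]
      have h3 : Tendsto (fun n : ℕ => Real.exp (-1) ^ n) atTop (nhds 0) :=
        tendsto_pow_atTop_nhds_zero_of_lt_one (Real.exp_pos _).le
          (Real.exp_lt_one_iff.mpr (by norm_num))
      simpa using tendsto_const_nhds.mul h3
    have h4 : Tendsto (fun n : ℕ => Real.log (1 + Real.exp (σ * x - n))) atTop
        (nhds 0) := by
      have h5 : Tendsto (fun n : ℕ => 1 + Real.exp (σ * x - n)) atTop (nhds 1) := by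
        simpa using tendsto_const_nhds.add h1
      have h6 := (Real.continuousAt_log (by norm_num : (1:ℝ) ≠ 0)).tendsto.comp h5
      simpa [Function.comp_def] using h6
    have h7 : Tendsto (fun n : ℕ => ψ n x) atTop (nhds (σ * x)) := by
      have := tendsto_const_nhds (x := σ * x) (f := atTop (α := ℕ)) |>.sub h4
      simpa using this
    exact (ENNReal.continuous_ofReal.tendsto _).comp
      ((Real.continuous_exp.tendsto _).comp (tendsto_const_nhds.mul h7))
  have hfatou := lintegral_liminf_le (μ := μ) (u := atTop) hmeas
  have hcongr : ∫⁻ x, liminf (fun n : ℕ => ENNReal.ofReal (Real.exp (t * ψ n x))) atTop ∂μ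
      = ∫⁻ x, ENNReal.ofReal (Real.exp (t * (σ * x))) ∂μ :=
    lintegral_congr fun x => (hpt x).liminf_eq
  have hbound : liminf (fun n : ℕ => ∫⁻ x, ENNReal.ofReal (Real.exp (t * ψ n x)) ∂μ) atTop
      ≤ ENNReal.ofReal (Real.exp 1) := by
    refine Filter.liminf_le_of_frequently_le' (Filter.Frequently.of_forall fun n => hlin n)
  have hfin : ∫⁻ x, ENNReal.ofReal (Real.exp (t * (σ * x))) ∂μ < ⊤ := by
    rw [← hcongr]
    exact lt_of_le_of_lt (le_trans hfatou hbound) ENNReal.ofReal_lt_top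
  refine ⟨(Real.continuous_exp.comp (continuous_const.mul
    (continuous_const.mul continuous_id))).aestronglyMeasurable, ?_⟩
  rw [hasFiniteIntegral_iff_ofReal (Filter.Eventually.of_forall fun x => (Real.exp_pos _).le)]
  exact hfin


private lemma stmt4_aux (μ : Measure ℝ) [IsProbabilityMeasure μ] (γ : ℝ) (hγ : 0 < γ)
    (hid : Integrable (fun x => x) μ) (hmean : ∫ x, x ∂μ = 0)
    (hpoinc : ∀ f : ℝ → ℝ, ContDiff ℝ (⊤ : ℕ∞) f →
      Integrable (fun x => f x ^ 2) μ → Integrable (fun x => deriv f x ^ 2) μ →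
      ∫ x, f x ^ 2 ∂μ - (∫ x, f x ∂μ) ^ 2 ≤ γ * ∫ x, deriv f x ^ 2 ∂μ)
    (σ : ℝ) (hσ : |σ| = 1) :
    Integrable (fun x => Real.exp ((Real.sqrt γ)⁻¹ * (σ * x))) μ := by
  set t : ℝ := (Real.sqrt γ)⁻¹ with ht
  have hsqpos : 0 < Real.sqrt γ := Real.sqrt_pos.mpr hγ
  have htpos : 0 < t := by rw [ht]; positivity
  have main : ∀ n : ℕ,
      (∫ x, Real.exp (t * (σ * x - Real.log (1 + Real.exp (σ * x - n)))) ∂μ ≤ Real.exp 1) ∧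
      Integrable (fun x => Real.exp (t * (σ * x - Real.log (1 + Real.exp (σ * x - n))))) μ := by
    intro n
    set ψ : ℝ → ℝ := fun x => σ * x - Real.log (1 + Real.exp (σ * x - n)) with hψdef
    set d : ℝ → ℝ := fun x => σ - Real.exp (σ * x - n) * σ / (1 + Real.exp (σ * x - n)) with hddef
    have hpos : ∀ x : ℝ, 0 < 1 + Real.exp (σ * x - n) := fun x => by positivity
    have hψcont : Continuous ψ := by
      refine (continuous_const.mul continuous_id).sub (Continuous.log ?_ fun x => (hpos x).ne')
      fun_prop
    have hψsmooth : ContDiff ℝ (⊤ : ℕ∞) ψ := by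
      refine ContDiff.sub (contDiff_const.mul contDiff_id) (ContDiff.log ?_ fun x => (hpos x).ne')
      exact contDiff_const.add ((contDiff_const.mul contDiff_id).sub contDiff_const).exp
    have hdcont : Continuous d := by
      refine continuous_const.sub (Continuous.div ?_ ?_ fun x => (hpos x).ne') <;> fun_prop
    have hψderiv : ∀ x : ℝ, HasDerivAt ψ (d x) x := by
      intro x
      have h1 : HasDerivAt (fun y : ℝ => σ * y) σ x := by
        simpa using (hasDerivAt_id x).const_mul σ
      have h2 : HasDerivAt (fun y : ℝ => 1 + Real.exp (σ * y - n)) (Real.exp (σ * x - n) * σ) x := by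
        have := ((h1.sub_const (n : ℝ)).exp).const_add 1
        simpa using this
      exact h1.sub (h2.log (hpos x).ne')
    have hdsq : ∀ x : ℝ, d x ^ 2 ≤ 1 := by
      intro x
      have he : 0 < Real.exp (σ * x - n) := Real.exp_pos _
      have hσ2 : σ ^ 2 = 1 := by rw [← sq_abs, hσ]; norm_num
      have hx : d x = σ / (1 + Real.exp (σ * x - n)) := by
        rw [hddef]; field_simp; ring
      rw [hx, div_pow, hσ2, div_le_one (by positivity)]
      nlinarith
    have hψub : ∀ x : ℝ, ψ x ≤ n := by
      intro x
      have : σ * x - n ≤ Real.log (1 + Real.exp (σ * x - n)) := by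
        calc σ * x - n = Real.log (Real.exp (σ * x - n)) := (Real.log_exp _).symm
          _ ≤ _ := Real.log_le_log (Real.exp_pos _) (by linarith [Real.exp_pos (σ * x - n)])
      simp only [hψdef]; linarith
    have hψlesx : ∀ x : ℝ, ψ x ≤ σ * x := by
      intro x
      have : 0 ≤ Real.log (1 + Real.exp (σ * x - n)) :=
        Real.log_nonneg (by linarith [Real.exp_pos (σ * x - n)])
      simp only [hψdef]; linarith
    have hψabs : ∀ x : ℝ, |ψ x| ≤ 2 * |x| + (n + Real.log 2) := by
      intro x
      have hsx : |σ * x| = |x| := by rw [abs_mul, hσ, one_mul]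
      have hax := abs_le.mp hsx.le
      have hn0 : (0:ℝ) ≤ n := Nat.cast_nonneg n
      have hl2 : 0 ≤ Real.log 2 := Real.log_nonneg (by norm_num)
      have hl0 : 0 ≤ Real.log (1 + Real.exp (σ * x - n)) :=
        Real.log_nonneg (by linarith [Real.exp_pos (σ * x - n)])
      have hlub : Real.log (1 + Real.exp (σ * x - n)) ≤ Real.log 2 + |x| + n := by
        have h2 : 1 + Real.exp (σ * x - n) ≤ 2 * Real.exp (max (σ * x - n) 0) := by
          rcases le_or_gt (σ * x - n) 0 with h | h
          · have : Real.exp (σ * x - n) ≤ 1 := Real.exp_le_one_iff.mpr h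
            rw [max_eq_right h]; simp; linarith
          · have : (1:ℝ) ≤ Real.exp (σ * x - n) := by
              rw [show (1:ℝ) = Real.exp 0 by simp]; exact Real.exp_le_exp.mpr h.le
            rw [max_eq_left h.le]; linarith
        calc Real.log (1 + Real.exp (σ * x - n)) ≤ Real.log (2 * Real.exp (max (σ * x - n) 0)) :=
              Real.log_le_log (hpos x) h2
          _ = Real.log 2 + max (σ * x - n) 0 := by
              rw [Real.log_mul (by norm_num) (Real.exp_pos _).ne', Real.log_exp]
          _ ≤ Real.log 2 + |x| + n := by
              have : max (σ * x - n) 0 ≤ |x| + n :=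
                max_le (by linarith [abs_nonneg x]) (by positivity)
              linarith
      rcases abs_cases (ψ x) with ⟨he, _⟩ | ⟨he, _⟩ <;> simp only [hψdef] at he <;>
        rw [he] <;> linarith [abs_nonneg x]
    have hψint : Integrable ψ μ := by
      refine Integrable.mono' (((hid.abs.const_mul 2)).add
        (integrable_const ((n : ℝ) + Real.log 2))) hψcont.aestronglyMeasurable ?_
      filter_upwards with x
      rw [Real.norm_eq_abs]
      simpa using hψabs x
    have hIneg : ∫ x, ψ x ∂μ ≤ 0 := by
      have h1 : ∫ x, ψ x ∂μ ≤ ∫ x, σ * x ∂μ := integral_mono hψint (hid.const_mul σ) hψlesx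
      have h2 : ∫ x, σ * x ∂μ = 0 := by
        rw [MeasureTheory.integral_const_mul, hmean, mul_zero]
      linarith
    have hexpint : ∀ c : ℝ, 0 ≤ c → Integrable (fun x => Real.exp (c * ψ x)) μ := by
      intro c hc
      refine Integrable.mono' (integrable_const (Real.exp (c * n)))
        ((Real.continuous_exp.comp (continuous_const.mul hψcont))).aestronglyMeasurable ?_
      filter_upwards with x
      rw [Real.norm_eq_abs, abs_of_pos (Real.exp_pos _)]
      exact Real.exp_le_exp.mpr (mul_le_mul_of_nonneg_left (hψub x) hc)
    have hrec := stmt4_rec μ γ hγ hpoinc ψ d n hψcont hψsmooth hdcont hψderiv hdsq hψub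
    exact ⟨stmt4_iter μ γ hγ t ht ψ n hψcont hψub hψint hIneg hexpint hrec, hexpint t htpos.le⟩
  exact stmt4_fatou μ t σ htpos hσ (fun n => (main n).1) (fun n => (main n).2)

theorem stmt_4 (μ : Measure ℝ) [IsProbabilityMeasure μ] (γ : ℝ) (hγ : 0 < γ)
    (hid : Integrable (fun x => x) μ) (hmean : ∫ x, x ∂μ = 0)
    (hpoinc : ∀ f : ℝ → ℝ, ContDiff ℝ (⊤ : ℕ∞) f →
      Integrable (fun x => f x ^ 2) μ → Integrable (fun x => deriv f x ^ 2) μ →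
      ∫ x, f x ^ 2 ∂μ - (∫ x, f x ∂μ) ^ 2 ≤ γ * ∫ x, deriv f x ^ 2 ∂μ) :
    Integrable (fun x => Real.exp (|x| / Real.sqrt γ)) μ := by
  have h1 := stmt4_aux μ γ hγ hid hmean hpoinc 1 (by norm_num)
  have h2 := stmt4_aux μ γ hγ hid hmean hpoinc (-1) (by norm_num)
  set t : ℝ := (Real.sqrt γ)⁻¹ with ht
  refine Integrable.mono' (h1.add h2) ?_ ?_
  · exact (Real.continuous_exp.comp (continuous_abs.div_const _)).aestronglyMeasurable
  · filter_upwards with x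
    rw [Real.norm_eq_abs, abs_of_pos (Real.exp_pos _)]
    have hx : |x| / Real.sqrt γ = t * |x| := by
      rw [ht, div_eq_mul_inv, mul_comm]
    rcases abs_cases x with ⟨h, _⟩ | ⟨h, _⟩ <;> rw [hx, h] <;>
      simp only [Pi.add_apply, one_mul, neg_one_mul, mul_neg]
    · linarith [Real.exp_pos (-(t*x))]
    · linarith [Real.exp_pos (t*x)]
end

section
/- Let V : ℝ → ℝ be smooth with V'' ≥ δ > 0, and let μ be the probability measure with density proportional to e^{−V}. Then the variance σ² of μ satisfies σ² ≥ 1 / ∫ V'' dμ. -/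
open MeasureTheory Real Filter

lemma aux_poly_atTop (δ c d : ℝ) (hδ : 0 < δ) :
    Tendsto (fun x : ℝ => δ/2 * x^2 - d * x - c) atTop atTop := by
  have h1 : Tendsto (fun x : ℝ => x * (δ/2 * x - d) - c) atTop atTop := by
    apply Filter.tendsto_atTop_add_const_right
    apply Tendsto.atTop_mul_atTop₀ tendsto_id
    apply Filter.tendsto_atTop_add_const_right
    exact (tendsto_id.const_mul_atTop (by linarith))
  refine h1.congr (fun x => by ring)

lemma aux_exp_tendsto (δ c d : ℝ) (hδ : 0 < δ) :
    Tendsto (fun x : ℝ => exp (c + d * x - δ/2 * x^2)) atTop (nhds 0) := by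
  apply Real.tendsto_exp_atBot.comp
  have := tendsto_neg_atTop_atBot.comp (aux_poly_atTop δ c d hδ)
  exact this.congr (fun x => by simp [Function.comp]; ring)

lemma aux_x_exp_tendsto (δ c d : ℝ) (hδ : 0 < δ) :
    Tendsto (fun x : ℝ => x * exp (c + d * x - δ/2 * x^2)) atTop (nhds 0) := by
  have hkey : ∀ᶠ x : ℝ in atTop, ‖x * exp (c + d * x - δ/2 * x^2)‖ ≤ x * exp (-x) := by
    have h1 : ∀ᶠ x : ℝ in atTop, (0:ℝ) ≤ δ/2 * x^2 - (d+1) * x - c :=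
      (aux_poly_atTop δ c (d+1) hδ).eventually_ge_atTop 0
    filter_upwards [h1, eventually_ge_atTop (0:ℝ)] with x hx hx0
    rw [Real.norm_eq_abs, abs_mul, abs_of_nonneg hx0, abs_of_nonneg (le_of_lt (exp_pos _))]
    exact mul_le_mul_of_nonneg_left (exp_le_exp.2 (by nlinarith)) hx0
  exact squeeze_zero_norm' hkey
    ((tendsto_pow_mul_exp_neg_atTop_nhds_zero 1).congr (fun x => by rw [pow_one]))

theorem stmt_6 (V : ℝ → ℝ) (δ : ℝ) (hδ : 0 < δ) (hV : ContDiff ℝ (⊤ : ℕ∞) V)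
    (hconv : ∀ x, δ ≤ deriv (deriv V) x)
    (hint : Integrable (fun x => Real.exp (-V x)))
    (μ : Measure ℝ)
    (hμ : μ = volume.withDensity
      (fun x => ENNReal.ofReal (Real.exp (-V x) / ∫ y, Real.exp (-V y))))
    (h1 : Integrable (fun x => x) μ) (h2 : Integrable (fun x => x ^ 2) μ)
    (hV'' : Integrable (fun x => deriv (deriv V) x) μ) :
    1 / (∫ x, deriv (deriv V) x ∂μ) ≤ ∫ x, x ^ 2 ∂μ - (∫ x, x ∂μ) ^ 2 := by
  set E : ℝ → ℝ := fun x => Real.exp (-V x) with hE_def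
  set Z : ℝ := ∫ y, Real.exp (-V y) with hZ_def
  have hEpos : ∀ x, 0 < E x := fun x => exp_pos _
  -- smoothness facts
  have hVinf : ContDiff ℝ (⊤ : ℕ∞) V := hV.of_le (by simp)
  have hVdiff : Differentiable ℝ V := hVinf.differentiable (by norm_num)
  have hgCD : ContDiff ℝ (⊤ : ℕ∞) (deriv V) := (contDiff_infty_iff_deriv.mp hVinf).2
  have hgdiff : Differentiable ℝ (deriv V) := hgCD.differentiable (by norm_num)
  have hgcont : Continuous (deriv V) := hgdiff.continuous
  have hGcont : Continuous (deriv (deriv V)) := hgCD.continuous_deriv (by norm_num)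
  have hEcont : Continuous E := (hVdiff.continuous.neg).rexp
  -- derivatives
  have hdV : ∀ x, HasDerivAt V (deriv V x) x := fun x => (hVdiff x).hasDerivAt
  have hdg : ∀ x, HasDerivAt (deriv V) (deriv (deriv V) x) x := fun x => (hgdiff x).hasDerivAt
  have hdE : ∀ x, HasDerivAt E (-(deriv V x) * E x) x := by
    intro x
    have := ((hdV x).neg).exp
    simpa [hE_def, mul_comm] using this
  -- positivity of Z
  have hZpos : 0 < Z := by
    rw [hZ_def, integral_pos_iff_support_of_nonneg_ae (ae_of_all _ fun x => (exp_pos _).le) hint]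
    have hsupp : Function.support (fun x : ℝ => Real.exp (-V x)) = Set.univ :=
      Set.eq_univ_of_forall fun x => (exp_pos _).ne'
    rw [hsupp]
    simp
  -- monotonicity of deriv V - δ x
  have hmono : Monotone (fun x => deriv V x - δ * x) := by
    have hd : ∀ x, HasDerivAt (fun x => deriv V x - δ * x) (deriv (deriv V) x - δ) x := by
      intro x
      exact (hdg x).sub (((hasDerivAt_id x).const_mul δ).congr_deriv (mul_one δ))
    apply monotone_of_deriv_nonneg
    · exact fun x => (hd x).differentiableAt
    · intro x
      rw [(hd x).deriv]
      linarith [hconv x]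
  -- Taylor lower bound
  have hTaylor : ∀ x, V 0 + deriv V 0 * x + δ/2 * x^2 ≤ V x := by
    set W : ℝ → ℝ := fun x => V x - deriv V 0 * x - δ/2 * x^2 with hW_def
    have hdW : ∀ x, HasDerivAt W (deriv V x - deriv V 0 - δ * x) x := by
      intro x
      have h1 : HasDerivAt (fun x : ℝ => deriv V 0 * x) (deriv V 0) x :=
        ((hasDerivAt_id x).const_mul (deriv V 0)).congr_deriv (mul_one _)
      have h2 : HasDerivAt (fun x : ℝ => δ/2 * x^2) (δ * x) x := by
        have := (hasDerivAt_pow 2 x).const_mul (δ/2)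
        refine this.congr_deriv ?_
        push_cast
        ring
      exact ((hdV x).sub h1).sub h2
    have hWderiv : ∀ x, deriv W x = deriv V x - deriv V 0 - δ * x := fun x => (hdW x).deriv
    have hWcont : Continuous W := by
      apply Continuous.sub
      apply Continuous.sub hVdiff.continuous
      · exact continuous_const.mul continuous_id
      · exact continuous_const.mul (continuous_pow 2)
    have hWdiff : ∀ x : ℝ, DifferentiableAt ℝ W x := fun x => (hdW x).differentiableAt
    have hmon : MonotoneOn W (Set.Ici 0) := by
      apply monotoneOn_of_deriv_nonneg (convex_Ici 0) hWcont.continuousOn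
        (fun x _ => (hWdiff x).differentiableWithinAt)
      intro x hx
      rw [interior_Ici] at hx
      rw [hWderiv]
      have := hmono (le_of_lt hx : (0:ℝ) ≤ x)
      simp only at this
      linarith
    have hant : AntitoneOn W (Set.Iic 0) := by
      apply antitoneOn_of_deriv_nonpos (convex_Iic 0) hWcont.continuousOn
        (fun x _ => (hWdiff x).differentiableWithinAt)
      intro x hx
      rw [interior_Iic] at hx
      rw [hWderiv]
      have := hmono (le_of_lt hx : x ≤ (0:ℝ))
      simp only at this
      linarith
    intro x
    have hW0 : W 0 = V 0 := by simp [hW_def]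
    rcases le_total 0 x with hx | hx
    · have := hmon Set.self_mem_Ici hx hx
      rw [hW0] at this
      simp only [hW_def] at this
      linarith
    · have := hant hx Set.self_mem_Iic hx
      rw [hW0] at this
      simp only [hW_def] at this
      linarith
  have hEbound : ∀ x, E x ≤ exp (-(V 0) + (-(deriv V 0)) * x - δ/2 * x^2) := by
    intro x
    apply exp_le_exp.2
    linarith [hTaylor x]
  have hEboundneg : ∀ x, E (-x) ≤ exp (-(V 0) + (deriv V 0) * x - δ/2 * x^2) := by
    intro x
    apply exp_le_exp.2
    have := hTaylor (-x)
    nlinarith [this]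
  -- conversion of integrals
  have hmeas : Measurable fun x => ENNReal.ofReal (E x / Z) :=
    ((hEcont.div_const Z).measurable).ennreal_ofReal
  have hmeasN : Measurable fun x => (E x / Z).toNNReal :=
    ((hEcont.div_const Z).measurable).real_toNNReal
  have hconv_int : ∀ f : ℝ → ℝ, ∫ x, f x ∂μ = (∫ x, f x * E x) / Z := by
    intro f
    rw [hμ]
    have hdens : (fun x => ENNReal.ofReal (E x / Z)) = fun x => ((E x / Z).toNNReal : ENNReal) :=
      rfl
    rw [hdens, integral_withDensity_eq_integral_smul hmeasN f]
    rw [← integral_div]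
    congr 1
    funext x
    have h0 : 0 ≤ E x / Z := div_nonneg (hEpos x).le hZpos.le
    rw [NNReal.smul_def, Real.coe_toNNReal _ h0]
    field_simp
    linear_combination (f x * E x) * mul_inv_cancel₀ hZpos.ne'
  have hconv_integrable : ∀ f : ℝ → ℝ, Integrable f μ → Integrable (fun x => f x * E x) := by
    intro f hf
    rw [hμ, integrable_withDensity_iff hmeas (ae_of_all _ fun x => ENNReal.ofReal_lt_top)] at hf
    have hf2 := hf.mul_const Z
    have heq : (fun x => f x * (ENNReal.ofReal (E x / Z)).toReal * Z) = fun x => f x * E x := by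
      funext x
      rw [ENNReal.toReal_ofReal (div_nonneg (hEpos x).le hZpos.le)]
      field_simp
    rwa [heq] at hf2
  have hxE : Integrable (fun x => x * E x) := hconv_integrable _ h1
  have hx2E : Integrable (fun x => x^2 * E x) := hconv_integrable _ h2
  have hGE : Integrable (fun x => deriv (deriv V) x * E x) := hconv_integrable _ hV''
  set K : ℝ := ∫ x, deriv (deriv V) x * E x with hK_def
  have hGEnonneg : ∀ x, 0 ≤ deriv (deriv V) x * E x :=
    fun x => mul_nonneg (le_trans hδ.le (hconv x)) (hEpos x).le
  have hKge : δ * Z ≤ K := by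
    rw [hK_def, hZ_def, ← integral_const_mul]
    exact integral_mono (hint.const_mul δ) hGE
      (fun x => mul_le_mul_of_nonneg_right (hconv x) (hEpos x).le)
  have hKpos : 0 < K := lt_of_lt_of_le (by positivity) hKge
  set ρ : ℝ := (∫ x, x * E x) / Z with hρ_def
  -- FTC identities
  have hFTC1 : ∀ a b : ℝ, (∫ x in a..b, ((x - ρ) * deriv V x - 1) * E x)
      = (ρ - b) * E b - (ρ - a) * E a := by
    intro a b
    apply intervalIntegral.integral_eq_sub_of_hasDerivAt
    · intro x _
      have h1 : HasDerivAt (fun x : ℝ => ρ - x) (-1) x := (hasDerivAt_id x).const_sub ρ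
      have := h1.mul (hdE x)
      refine HasDerivAt.congr_deriv this ?_
      ring
    · apply Continuous.intervalIntegrable
      exact (((continuous_id.sub continuous_const).mul hgcont).sub continuous_const).mul hEcont
  have hFTC2 : ∀ a b : ℝ, (∫ x in a..b, ((deriv V x)^2 - deriv (deriv V) x) * E x)
      = (-(deriv V b) * E b) - (-(deriv V a) * E a) := by
    intro a b
    apply intervalIntegral.integral_eq_sub_of_hasDerivAt
    · intro x _
      have := ((hdg x).neg).mul (hdE x)
      refine HasDerivAt.congr_deriv this ?_
      simp only [Pi.neg_apply]
      ring
    · apply Continuous.intervalIntegrable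
      exact (((hgcont.pow 2).sub hGcont).mul hEcont)
  -- sign of deriv V far out
  set M : ℝ := 1 + |deriv V 0| / δ with hM_def
  have hMpos : 0 < M := by positivity
  have hgpos : ∀ x, M ≤ x → 0 ≤ deriv V x := by
    intro x hx
    have h0 := hmono (show (0:ℝ) ≤ x from le_trans hMpos.le hx)
    simp only at h0
    have : |deriv V 0| / δ ≤ x := le_trans (by linarith) hx
    have h2 : |deriv V 0| ≤ δ * x := by
      rw [div_le_iff₀ hδ] at this
      linarith [this]
    have := neg_abs_le (deriv V 0)
    linarith
  have hgneg : ∀ x, x ≤ -M → deriv V x ≤ 0 := by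
    intro x hx
    have h0 := hmono (show x ≤ (0:ℝ) from le_trans hx (by linarith))
    simp only at h0
    have hxM : M ≤ -x := by linarith
    have : |deriv V 0| / δ ≤ -x := le_trans (by linarith) hxM
    have h2 : |deriv V 0| ≤ δ * (-x) := by
      rw [div_le_iff₀ hδ] at this
      linarith [this]
    have := le_abs_self (deriv V 0)
    linarith
  -- sequences
  have hta : Tendsto (fun n : ℕ => -(M + n)) atTop atBot := by
    apply tendsto_neg_atTop_atBot.comp
    exact tendsto_atTop_add_const_left _ M tendsto_natCast_atTop_atTop
  have htb : Tendsto (fun n : ℕ => M + (n:ℝ)) atTop atTop :=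
    tendsto_atTop_add_const_left _ M tendsto_natCast_atTop_atTop
  -- bound on interval integrals of (deriv V)^2 E
  have hab : ∀ n : ℕ, -(M + (n:ℝ)) ≤ M + (n:ℝ) := by
    intro n
    have : (0:ℝ) ≤ (n:ℝ) := Nat.cast_nonneg n
    linarith
  have hSb : ∀ n : ℕ, (∫ x in (-(M + (n:ℝ)))..(M + (n:ℝ)), (deriv V x)^2 * E x) ≤ K := by
    intro n
    set a := -(M + (n:ℝ))
    set b := M + (n:ℝ)
    have h2 := hFTC2 a b
    have hii1 : IntervalIntegrable (fun x => (deriv V x)^2 * E x) volume a b :=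
      ((hgcont.pow 2).mul hEcont).intervalIntegrable a b
    have hii2 : IntervalIntegrable (fun x => deriv (deriv V) x * E x) volume a b :=
      (hGcont.mul hEcont).intervalIntegrable a b
    have hsplit : (∫ x in a..b, ((deriv V x)^2 - deriv (deriv V) x) * E x)
        = (∫ x in a..b, (deriv V x)^2 * E x) - ∫ x in a..b, deriv (deriv V) x * E x := by
      rw [← intervalIntegral.integral_sub hii1 hii2]
      apply intervalIntegral.integral_congr
      intro x _
      ring
    have hbnd : (-(deriv V b) * E b) - (-(deriv V a) * E a) ≤ 0 := by
      have hga : deriv V a ≤ 0 := hgneg a (by show -(M + (n:ℝ)) ≤ -M; linarith [Nat.cast_nonneg (α := ℝ) n])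
      have hgb : 0 ≤ deriv V b := hgpos b (by show M ≤ M + (n:ℝ); linarith [Nat.cast_nonneg (α := ℝ) n])
      have hEa := (hEpos a).le
      have hEb := (hEpos b).le
      nlinarith
    have hle : (∫ x in a..b, deriv (deriv V) x * E x) ≤ K := by
      rw [intervalIntegral.integral_of_le (hab n)]
      exact setIntegral_le_integral hGE (ae_of_all _ hGEnonneg)
    rw [hsplit] at h2
    linarith
  have hg2E : Integrable (fun x => (deriv V x)^2 * E x) := by
    apply integrable_of_intervalIntegral_norm_bounded K
      (fun n : ℕ => ((hgcont.pow 2).mul hEcont).integrableOn_Ioc) hta htb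
    refine Filter.Eventually.of_forall fun n => ?_
    have heq : (∫ x in (-(M + (n:ℝ)))..(M + (n:ℝ)), ‖(deriv V x)^2 * E x‖)
        = ∫ x in (-(M + (n:ℝ)))..(M + (n:ℝ)), (deriv V x)^2 * E x := by
      apply intervalIntegral.integral_congr
      intro x _
      simp only [Real.norm_eq_abs]
      exact abs_of_nonneg (mul_nonneg (sq_nonneg _) (hEpos x).le)
    exact heq.le.trans (hSb n)
  have hS_le : (∫ x, (deriv V x)^2 * E x) ≤ K := by
    refine le_of_tendsto (intervalIntegral_tendsto_integral hg2E hta htb) ?_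
    exact Filter.Eventually.of_forall hSb
  -- integrability of (x-ρ) g E and (x-ρ)^2 E
  have hsq : Integrable (fun x => (x - ρ)^2 * E x) := by
    have heq : (fun x => (x - ρ)^2 * E x)
        = fun x => (x^2 * E x - (2*ρ) * (x * E x)) + ρ^2 * E x := by
      funext x; ring
    rw [heq]
    exact (hx2E.sub (hxE.const_mul (2*ρ))).add (hint.const_mul (ρ^2))
  have hxgE : Integrable (fun x => (x - ρ) * deriv V x * E x) := by
    apply Integrable.mono' ((hsq.add hg2E).div_const 2)
    · exact (((continuous_id.sub continuous_const).mul hgcont).mul hEcont).aestronglyMeasurable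
    · refine ae_of_all _ fun x => ?_
      rw [Real.norm_eq_abs, abs_mul, abs_mul]
      rw [abs_of_nonneg (hEpos x).le]
      have h1 : |x - ρ| * |deriv V x| ≤ ((x - ρ)^2 + (deriv V x)^2) / 2 := by
        nlinarith [sq_nonneg (|x - ρ| - |deriv V x|), sq_abs (x - ρ), sq_abs (deriv V x),
          abs_nonneg (x - ρ), abs_nonneg (deriv V x)]
      have h2 : 0 ≤ E x := (hEpos x).le
      calc |x - ρ| * |deriv V x| * E x ≤ (((x - ρ)^2 + (deriv V x)^2) / 2) * E x :=
            mul_le_mul_of_nonneg_right h1 h2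
        _ = ((x - ρ)^2 * E x + (deriv V x)^2 * E x) / 2 := by ring
  -- boundary tendsto
  have htop' : Tendsto (fun x => (ρ - x) * E x) atTop (nhds 0) := by
    apply squeeze_zero_norm' (a := fun x : ℝ =>
      x * exp (-V 0 + -deriv V 0 * x - δ/2 * x^2) + |ρ| * exp (-V 0 + -deriv V 0 * x - δ/2 * x^2))
    · filter_upwards [eventually_ge_atTop (0:ℝ)] with x hx0
      rw [Real.norm_eq_abs, abs_mul, abs_of_nonneg (hEpos x).le]
      have h1 : |ρ - x| ≤ x + |ρ| := by
        rw [abs_sub_comm]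
        calc |x - ρ| ≤ |x| + |ρ| := abs_sub _ _
          _ = x + |ρ| := by rw [abs_of_nonneg hx0]
      calc |ρ - x| * E x ≤ (x + |ρ|) * E x :=
            mul_le_mul_of_nonneg_right h1 (hEpos x).le
        _ ≤ (x + |ρ|) * exp (-V 0 + -deriv V 0 * x - δ/2 * x^2) :=
            mul_le_mul_of_nonneg_left (hEbound x) (by positivity)
        _ = _ := by ring
    · have := (aux_x_exp_tendsto δ (-V 0) (-deriv V 0) hδ).add
        ((aux_exp_tendsto δ (-V 0) (-deriv V 0) hδ).const_mul |ρ|)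
      simpa using this
  have hbot' : Tendsto (fun x => (ρ - x) * E x) atBot (nhds 0) := by
    rw [show (atBot : Filter ℝ) = Filter.map Neg.neg atTop from map_neg_atTop.symm,
      tendsto_map'_iff]
    apply squeeze_zero_norm' (a := fun x : ℝ =>
      x * exp (-V 0 + deriv V 0 * x - δ/2 * x^2) + |ρ| * exp (-V 0 + deriv V 0 * x - δ/2 * x^2))
    · filter_upwards [eventually_ge_atTop (0:ℝ)] with x hx0
      show ‖(ρ - -x) * E (-x)‖ ≤ _
      rw [Real.norm_eq_abs, abs_mul, abs_of_nonneg (hEpos (-x)).le]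
      have h1 : |ρ - -x| ≤ x + |ρ| := by
        have he : ρ - -x = x + ρ := by ring
        calc |ρ - -x| = |x + ρ| := by rw [he]
          _ ≤ |x| + |ρ| := abs_add_le _ _
          _ = x + |ρ| := by rw [abs_of_nonneg hx0]
      calc |ρ - -x| * E (-x) ≤ (x + |ρ|) * E (-x) :=
            mul_le_mul_of_nonneg_right h1 (hEpos _).le
        _ ≤ (x + |ρ|) * exp (-V 0 + deriv V 0 * x - δ/2 * x^2) :=
            mul_le_mul_of_nonneg_left (hEboundneg x) (by positivity)
        _ = _ := by ring
    · have := (aux_x_exp_tendsto δ (-V 0) (deriv V 0) hδ).add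
        ((aux_exp_tendsto δ (-V 0) (deriv V 0) hδ).const_mul |ρ|)
      simpa using this
  -- IBP identity
  have hiInt : Integrable (fun x => ((x - ρ) * deriv V x - 1) * E x) := by
    refine (hxgE.sub hint).congr (ae_of_all _ fun x => ?_)
    show (x - ρ) * deriv V x * E x - E x = ((x - ρ) * deriv V x - 1) * E x
    ring
  have hInt1 : (∫ x, (x - ρ) * deriv V x * E x) = Z := by
    have hlim1 := intervalIntegral_tendsto_integral hiInt hta htb
    have hlim1' : Tendsto (fun n : ℕ => (ρ - (M + (n:ℝ))) * E (M + (n:ℝ))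
        - (ρ - (-(M + (n:ℝ)))) * E (-(M + (n:ℝ)))) atTop
        (nhds (∫ x, ((x - ρ) * deriv V x - 1) * E x)) := by
      refine hlim1.congr fun n => ?_
      exact hFTC1 _ _
    have hlim2 : Tendsto (fun n : ℕ => (ρ - (M + (n:ℝ))) * E (M + (n:ℝ))
        - (ρ - (-(M + (n:ℝ)))) * E (-(M + (n:ℝ)))) atTop (nhds 0) := by
      have := (htop'.comp htb).sub (hbot'.comp hta)
      simpa using this
    have hzero : (∫ x, ((x - ρ) * deriv V x - 1) * E x) = 0 :=
      tendsto_nhds_unique hlim1' hlim2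
    have hsplit : (∫ x, ((x - ρ) * deriv V x - 1) * E x)
        = (∫ x, (x - ρ) * deriv V x * E x) - Z := by
      have heq2 : (fun x => ((x - ρ) * deriv V x - 1) * E x)
          = fun x => (x - ρ) * deriv V x * E x - E x := by funext x; ring
      rw [heq2, integral_sub hxgE hint]
    rw [hsplit] at hzero
    linarith
  -- final algebra
  set S : ℝ := ∫ x, (deriv V x)^2 * E x with hS_def
  set T : ℝ := ∫ x, (x - ρ)^2 * E x with hT_def
  have hQ : 0 ≤ (Z/K)^2 * S - 2 * (Z/K) * Z + T := by
    have h0 : 0 ≤ ∫ x, ((Z/K) * deriv V x - (x - ρ))^2 * E x :=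
      integral_nonneg fun x => mul_nonneg (sq_nonneg _) (hEpos x).le
    have heq : (fun x => ((Z/K) * deriv V x - (x - ρ))^2 * E x)
        = fun x => ((Z/K)^2 * ((deriv V x)^2 * E x)
            - 2 * (Z/K) * ((x - ρ) * deriv V x * E x)) + (x - ρ)^2 * E x := by
      funext x; ring
    rw [heq] at h0
    have hA : Integrable (fun x => (Z/K)^2 * ((deriv V x)^2 * E x)
        - 2 * (Z/K) * ((x - ρ) * deriv V x * E x)) :=
      (hg2E.const_mul ((Z/K)^2)).sub (hxgE.const_mul (2 * (Z/K)))
    rw [integral_add hA hsq,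
      integral_sub (hg2E.const_mul ((Z/K)^2)) (hxgE.const_mul (2 * (Z/K))),
      integral_const_mul, integral_const_mul, hInt1] at h0
    exact h0
  have hZT : Z^2 / K ≤ T := by
    have hK0 : K ≠ 0 := hKpos.ne'
    have hSK : (Z/K)^2 * S ≤ (Z/K)^2 * K := mul_le_mul_of_nonneg_left hS_le (sq_nonneg _)
    have e1 : (Z/K)^2 * K = Z^2 / K := by field_simp
    have e2 : 2 * (Z/K) * Z = 2 * (Z^2 / K) := by field_simp
    linarith [hQ, hSK, e1, e2]
  -- conclude
  have hGoal1 : (∫ x, deriv (deriv V) x ∂μ) = K / Z := by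
    rw [hconv_int]
  have hGoal2 : (∫ x, x ∂μ) = ρ := by rw [hconv_int]
  have hGoal3 : (∫ x, x^2 ∂μ) = (∫ x, x^2 * E x) / Z := by rw [hconv_int]
  rw [hGoal1, hGoal2, hGoal3]
  have hTexp : T = (∫ x, x^2 * E x) - ρ^2 * Z := by
    have hxEval : (∫ x, x * E x) = ρ * Z := by
      rw [hρ_def]; field_simp
    rw [hT_def]
    have heq : (fun x => (x - ρ)^2 * E x)
        = fun x => (x^2 * E x - (2*ρ) * (x * E x)) + ρ^2 * E x := by
      funext x; ring
    have hB : Integrable (fun x => x^2 * E x - (2*ρ) * (x * E x)) :=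
      hx2E.sub (hxE.const_mul (2*ρ))
    rw [heq, integral_add hB (hint.const_mul (ρ^2)),
      integral_sub hx2E (hxE.const_mul (2*ρ)), integral_const_mul, integral_const_mul, hxEval]
    rw [← hZ_def]
    ring
  have hxint2 : (∫ x, x^2 * E x) / Z - ρ^2 = T / Z := by
    rw [hTexp]; field_simp [hZpos.ne']
  rw [hxint2, one_div_div]
  rw [div_le_div_iff₀ hKpos hZpos]
  calc Z * Z = Z^2 := by ring
    _ = (Z^2/K) * K := by field_simp
    _ ≤ T * K := mul_le_mul_of_nonneg_right hZT hKpos.le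
end

section
/- Let ν be a probability measure on ℝ^N, suppose that for each k the conditional measure ν(·|𝓕_k) satisfies a Poincaré inequality Var(F|𝓕_k) ≤ γ Σ_{i ≠ k} ν((∂_i F)²|𝓕_k) (ν-a.s.) for all smooth F, where 𝓕_k is the σ-algebra generated by the k-th coordinate. Then Var_ν(F) ≤ ((N−1)/N) γ Σ_{i=1}^N ν[(∂_i F)²] + ν[F(𝓟 F)] − ν(F)², where 𝓟F = (1/N) Σ_k ν(F|𝓕_k). -/
open MeasureTheory Real

/-- The σ-algebra generated by the k-th coordinate. -/
def coordSA (N : ℕ) (k : Fin N) : MeasurableSpace (Fin N → ℝ) :=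
  MeasurableSpace.comap (fun η => η k) inferInstance

/-- Conditional Jensen for the square, obtained by rational approximation. -/
lemma condexp_sq_aux {α : Type*} {m m0 : MeasurableSpace α} (hm : m ≤ m0)
    (μ : @Measure α m0) [IsProbabilityMeasure μ] {f : α → ℝ}
    (hf : Integrable f μ) (hf2 : Integrable (fun x => f x ^ 2) μ) :
    ∀ᵐ x ∂μ, ((μ[f|m]) x) ^ 2 ≤ (μ[(fun x => f x ^ 2)|m]) x := by
  have key : ∀ q : ℚ, ∀ᵐ x ∂μ,
      2 * (q : ℝ) * ((μ[f|m]) x) - (q : ℝ) ^ 2 ≤ (μ[(fun x => f x ^ 2)|m]) x := by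
    intro q
    have h0 : 0 ≤ᵐ[μ] μ[(fun x => (f x - (q : ℝ)) ^ 2)|m] :=
      condExp_nonneg (Filter.Eventually.of_forall fun x => sq_nonneg _)
    have heq : (fun x => (f x - (q : ℝ)) ^ 2)
        = (fun x => f x ^ 2) - (2 * (q : ℝ)) • f + (fun _ : α => (q : ℝ) ^ 2) := by
      funext x
      simp only [Pi.add_apply, Pi.sub_apply, Pi.smul_apply, smul_eq_mul]
      ring
    have h1 : μ[(fun x => (f x - (q : ℝ)) ^ 2)|m]
        =ᵐ[μ] μ[(fun x => f x ^ 2) - (2 * (q : ℝ)) • f|m] + μ[(fun _ : α => (q : ℝ) ^ 2)|m] := by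
      rw [heq]
      exact condExp_add (hf2.sub (hf.smul (2 * (q : ℝ)))) (integrable_const _) (m := m)
    have h2 : μ[(fun x => f x ^ 2) - (2 * (q : ℝ)) • f|m]
        =ᵐ[μ] μ[(fun x => f x ^ 2)|m] - μ[(2 * (q : ℝ)) • f|m] :=
      condExp_sub hf2 (hf.smul _) (m := m)
    have h3 : μ[(2 * (q : ℝ)) • f|m] =ᵐ[μ] (2 * (q : ℝ)) • μ[f|m] := condExp_smul _ _ (m := m)
    have h4 : μ[(fun _ : α => (q : ℝ) ^ 2)|m] = fun _ => (q : ℝ) ^ 2 := condExp_const hm _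
    filter_upwards [h0, h1, h2, h3] with x h0x h1x h2x h3x
    rw [Pi.zero_apply] at h0x
    rw [h1x, Pi.add_apply, h4, h2x, Pi.sub_apply, h3x, Pi.smul_apply, smul_eq_mul] at h0x
    have h0x' : 0 ≤ (μ[fun x => f x ^ 2|m]) x - 2 * (q : ℝ) * (μ[f|m]) x + (q : ℝ) ^ 2 := h0x
    linarith
  rw [← ae_all_iff] at key
  filter_upwards [key] with x hx
  by_contra hcon
  push_neg at hcon
  set a := (μ[f|m]) x with ha
  set E := (μ[(fun x => f x ^ 2)|m]) x with hE
  have hδ : 0 < a ^ 2 - E := by linarith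
  obtain ⟨q, hq⟩ := exists_rat_near a (Real.sqrt_pos.2 hδ)
  have hq2 : (a - (q : ℝ)) ^ 2 < a ^ 2 - E := by
    have h1 : |a - (q : ℝ)| ^ 2 < Real.sqrt (a ^ 2 - E) ^ 2 := by
      apply pow_lt_pow_left₀ hq (abs_nonneg _)
      norm_num
    rwa [sq_abs, Real.sq_sqrt hδ.le] at h1
  have := hx q
  nlinarith [sq_nonneg (a - (q : ℝ))]

theorem stmt_11 (N : ℕ) (hN : 1 ≤ N) (ν : Measure (Fin N → ℝ)) [IsProbabilityMeasure ν]
    (γ : ℝ) (hγ : 0 ≤ γ)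
    (hcondpoinc : ∀ G : (Fin N → ℝ) → ℝ, ContDiff ℝ (⊤ : ℕ∞) G → ∀ k : Fin N,
      ∀ᵐ η ∂ν,
        (ν[(fun η => G η ^ 2) | coordSA N k]) η - ((ν[G | coordSA N k]) η) ^ 2 ≤
          γ * ∑ i ∈ Finset.univ.erase k,
            (ν[(fun η => (fderiv ℝ G η (Pi.single i 1)) ^ 2) | coordSA N k]) η)
    (F : (Fin N → ℝ) → ℝ) (hF : ContDiff ℝ (⊤ : ℕ∞) F)
    (hFi : Integrable F ν) (hF2 : Integrable (fun η => F η ^ 2) ν)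
    (hmix : Integrable
      (fun η => F η * ((1 / (N : ℝ)) * ∑ k : Fin N, (ν[F | coordSA N k]) η)) ν)
    (hderi : ∀ i : Fin N, Integrable (fun η => (fderiv ℝ F η (Pi.single i 1)) ^ 2) ν) :
    ∫ η, F η ^ 2 ∂ν - (∫ η, F η ∂ν) ^ 2 ≤
      (((N : ℝ) - 1) / (N : ℝ)) * γ *
        ∑ i : Fin N, ∫ η, (fderiv ℝ F η (Pi.single i 1)) ^ 2 ∂ν
      + ∫ η, F η * ((1 / (N : ℝ)) * ∑ k : Fin N, (ν[F | coordSA N k]) η) ∂ν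
      - (∫ η, F η ∂ν) ^ 2 := by
  classical
  have hm : ∀ k : Fin N, coordSA N k ≤ (inferInstance : MeasurableSpace (Fin N → ℝ)) :=
    fun k => (measurable_pi_apply k).comap_le
  have hNpos : (0 : ℝ) < N := by
    have : (0 : ℕ) < N := hN
    exact_mod_cast this
  -- conditional Jensen
  have hJ : ∀ k : Fin N, ∀ᵐ η ∂ν,
      ((ν[F|coordSA N k]) η) ^ 2 ≤ (ν[(fun η => F η ^ 2)|coordSA N k]) η :=
    fun k => condexp_sq_aux (hm k) ν hFi hF2
  -- integrability of the square of the conditional expectation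
  have hg2 : ∀ k : Fin N, Integrable (fun η => ((ν[F|coordSA N k]) η) ^ 2) ν := by
    intro k
    have sm : StronglyMeasurable (ν[F|coordSA N k]) :=
      (stronglyMeasurable_condExp (m := coordSA N k)).mono (hm k)
    refine Integrable.mono' (integrable_condExp (f := fun η => F η ^ 2) (m := coordSA N k))
      ?_ ?_
    · have : (fun η => ((ν[F|coordSA N k]) η) ^ 2)
          = fun η => (ν[F|coordSA N k]) η * (ν[F|coordSA N k]) η :=
        funext fun η => pow_two _
      rw [this]
      exact (sm.mul sm).aestronglyMeasurable
    · filter_upwards [hJ k] with η hη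
      rw [Real.norm_eq_abs, abs_of_nonneg (sq_nonneg _)]
      exact hη
  -- integrability of F times the conditional expectation
  have hFg : ∀ k : Fin N, Integrable (fun η => F η * (ν[F|coordSA N k]) η) ν := by
    intro k
    have sm : StronglyMeasurable (ν[F|coordSA N k]) :=
      (stronglyMeasurable_condExp (m := coordSA N k)).mono (hm k)
    refine Integrable.mono' (((hF2.add (hg2 k)).div_const 2)) ?_ ?_
    · exact hFi.aestronglyMeasurable.mul sm.aestronglyMeasurable
    · refine Filter.Eventually.of_forall fun η => ?_
      rw [Real.norm_eq_abs, abs_mul]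
      show |F η| * |(ν[F|coordSA N k]) η| ≤ (F η ^ 2 + ((ν[F|coordSA N k]) η) ^ 2) / 2
      nlinarith [sq_nonneg (|F η| - |(ν[F|coordSA N k]) η|), sq_abs (F η),
        sq_abs ((ν[F|coordSA N k]) η), abs_nonneg (F η), abs_nonneg ((ν[F|coordSA N k]) η)]
  -- key identity ∫ F g = ∫ g²
  have hkey : ∀ k : Fin N,
      ∫ η, F η * (ν[F|coordSA N k]) η ∂ν = ∫ η, ((ν[F|coordSA N k]) η) ^ 2 ∂ν := by
    intro k
    have hint : Integrable (ν[F|coordSA N k] * F) ν :=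
      (hFg k).congr (Filter.Eventually.of_forall fun η => mul_comm _ _)
    have hpull : ν[ν[F|coordSA N k] * F|coordSA N k]
        =ᵐ[ν] ν[F|coordSA N k] * ν[F|coordSA N k] :=
      condExp_mul_of_stronglyMeasurable_left stronglyMeasurable_condExp hint hFi
    calc ∫ η, F η * (ν[F|coordSA N k]) η ∂ν
        = ∫ η, (ν[F|coordSA N k] * F) η ∂ν := by
          refine integral_congr_ae (Filter.Eventually.of_forall fun η => ?_)
          simp [mul_comm]
      _ = ∫ η, (ν[ν[F|coordSA N k] * F|coordSA N k]) η ∂ν := (integral_condExp (hm k)).symm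
      _ = ∫ η, (ν[F|coordSA N k] * ν[F|coordSA N k]) η ∂ν := integral_congr_ae hpull
      _ = ∫ η, ((ν[F|coordSA N k]) η) ^ 2 ∂ν := by
          refine integral_congr_ae (Filter.Eventually.of_forall fun η => ?_)
          simp [pow_two]
  -- per-coordinate integrated Poincaré inequality
  have hEk : ∀ k : Fin N,
      ∫ η, F η ^ 2 ∂ν - ∫ η, F η * (ν[F|coordSA N k]) η ∂ν ≤
        γ * ∑ i ∈ Finset.univ.erase k, ∫ η, (fderiv ℝ F η (Pi.single i 1)) ^ 2 ∂ν := by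
    intro k
    have hL : Integrable (fun η =>
        (ν[(fun η => F η ^ 2)|coordSA N k]) η - ((ν[F|coordSA N k]) η) ^ 2) ν :=
      integrable_condExp.sub (hg2 k)
    have hR : Integrable (fun η => γ * ∑ i ∈ Finset.univ.erase k,
        (ν[(fun η => (fderiv ℝ F η (Pi.single i 1)) ^ 2)|coordSA N k]) η) ν :=
      (integrable_finset_sum _ fun i _ => integrable_condExp).const_mul γ
    have hmono := integral_mono_ae hL hR (hcondpoinc F hF k)
    rw [integral_sub integrable_condExp (hg2 k), integral_condExp (hm k), ← hkey k] at hmono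
    rw [integral_const_mul, integral_finset_sum _ (fun i _ => integrable_condExp)] at hmono
    calc ∫ η, F η ^ 2 ∂ν - ∫ η, F η * (ν[F|coordSA N k]) η ∂ν
        ≤ γ * ∑ i ∈ Finset.univ.erase k,
            ∫ η, (ν[(fun η => (fderiv ℝ F η (Pi.single i 1)) ^ 2)|coordSA N k]) η ∂ν := hmono
      _ = γ * ∑ i ∈ Finset.univ.erase k, ∫ η, (fderiv ℝ F η (Pi.single i 1)) ^ 2 ∂ν := by
          congr 1
          exact Finset.sum_congr rfl fun i _ => integral_condExp (hm k)
  -- abbreviations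
  set A := ∫ η, F η ^ 2 ∂ν with hA
  set S := ∑ i : Fin N, ∫ η, (fderiv ℝ F η (Pi.single i 1)) ^ 2 ∂ν with hS
  set I : Fin N → ℝ := fun k => ∫ η, F η * (ν[F|coordSA N k]) η ∂ν with hI
  -- summing over k
  have hsum : (N : ℝ) * A - ∑ k : Fin N, I k ≤ γ * (((N : ℝ) - 1) * S) := by
    have h1 : ∑ k : Fin N, (A - I k) ≤ ∑ k : Fin N, γ *
        ∑ i ∈ Finset.univ.erase k, ∫ η, (fderiv ℝ F η (Pi.single i 1)) ^ 2 ∂ν :=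
      Finset.sum_le_sum fun k _ => hEk k
    have h2 : ∑ k : Fin N, (A - I k) = (N : ℝ) * A - ∑ k : Fin N, I k := by
      rw [Finset.sum_sub_distrib, Finset.sum_const, Finset.card_univ, Fintype.card_fin,
        nsmul_eq_mul]
    have h3 : ∑ k : Fin N, γ *
        ∑ i ∈ Finset.univ.erase k, ∫ η, (fderiv ℝ F η (Pi.single i 1)) ^ 2 ∂ν
        = γ * (((N : ℝ) - 1) * S) := by
      rw [← Finset.mul_sum]
      congr 1
      have : ∀ k : Fin N, ∑ i ∈ Finset.univ.erase k,
          ∫ η, (fderiv ℝ F η (Pi.single i 1)) ^ 2 ∂ν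
          = S - ∫ η, (fderiv ℝ F η (Pi.single k 1)) ^ 2 ∂ν :=
        fun k => Finset.sum_erase_eq_sub (Finset.mem_univ k)
      rw [Finset.sum_congr rfl fun k _ => this k, Finset.sum_sub_distrib, Finset.sum_const,
        Finset.card_univ, Fintype.card_fin, nsmul_eq_mul, ← hS]
      ring
    rw [h2, h3] at h1
    exact h1
  -- the mixing integral
  have hB : ∫ η, F η * ((1 / (N : ℝ)) * ∑ k : Fin N, (ν[F|coordSA N k]) η) ∂ν
      = (1 / (N : ℝ)) * ∑ k : Fin N, I k := by
    have hfun : (fun η => F η * ((1 / (N : ℝ)) * ∑ k : Fin N, (ν[F|coordSA N k]) η))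
        = fun η => ∑ k : Fin N, (1 / (N : ℝ)) * (F η * (ν[F|coordSA N k]) η) := by
      funext η
      rw [Finset.mul_sum, Finset.mul_sum]
      exact Finset.sum_congr rfl fun k _ => by ring
    rw [hfun, integral_finset_sum _ fun k _ => (hFg k).const_mul _, Finset.mul_sum]
    exact Finset.sum_congr rfl fun k _ => integral_const_mul _ _
  rw [hB]
  have hgoal : A ≤ ((N : ℝ) - 1) / (N : ℝ) * γ * S + 1 / (N : ℝ) * ∑ k : Fin N, I k := by
    have heq : ((N : ℝ) - 1) / (N : ℝ) * γ * S + 1 / (N : ℝ) * ∑ k : Fin N, I k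
        = (γ * (((N : ℝ) - 1) * S) + ∑ k : Fin N, I k) / (N : ℝ) := by
      field_simp
    rw [heq, le_div_iff₀ hNpos]
    linarith
  linarith
end
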